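/- For all natural numbers d, p ≥ 1 and all vectors q, k ∈ ℝ^d, the tensor-power and symmetric-power embeddings induce the same kernel: ⟨tpow_p(q), tpow_p(k)⟩ = ⟨spow_p(q), spow_p(k)⟩, and consequently linear attention with feature map tpow_p and linear attention with feature map spow_p produce identical outputs for all inputs Q_1,…,Q_t, K_1,…,K_t ∈ ℝ^d, V_1,…,V_t ∈ ℝ^v: Σ_{j=1}^{i} ⟨tpow_p(Q_i), tpow_p(K_j)⟩ V_j = Σ_{j=1}^{i} ⟨spow_p(Q_i), spow_p(K_j)⟩ V_j for every 1 ≤ i ≤ t. -/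

import Mathlib

open scoped Classical

/-- hist_k(i): the number of positions j with i_j = k. -/
def hist {p d : ℕ} (i : Fin p → Fin d) (k : Fin d) : ℕ :=
  (Finset.univ.filter (fun j => i j = k)).card

/-- The symmetric power embedding spow_p : ℝ^d → ℝ^{|NDMI^p_d|}. -/
noncomputable def spow {d : ℕ} (p : ℕ) (x : Fin d → ℝ)
    (i : {f : Fin p → Fin d // Monotone f}) : ℝ :=
  Real.sqrt ((p.factorial : ℝ) / ∏ k, ((hist i.1 k).factorial : ℝ)) * ∏ j, x (i.1 j)

/-!
Both kernels equal `⟪q, k⟫ ^ p`. For the tensor power this is the expansion of a power of a sum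
into a sum over all multi-indices. For the symmetric power it is the multinomial expansion:
a non-decreasing multi-index is determined by its histogram, every exponent vector of total
degree `p` is the histogram of one, and the square-root weights of `spow` multiply to the
multinomial coefficient of that histogram.
-/

open Finset

section Histogram

variable {p d : ℕ}

lemma hist_eq_count (f : Fin p → Fin d) (k : Fin d) : hist f k = (List.ofFn f).count k := by
  have hval : ((List.ofFn f : List (Fin d)) : Multiset (Fin d)) = univ.val.map f := by
    simp [List.ofFn_eq_map, Fin.univ_def]
  rw [← Multiset.coe_count, hval, Multiset.count_map, hist, ← filter_val]
  simp [Finset.card, eq_comm]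

lemma sum_hist (f : Fin p → Fin d) : ∑ k, hist f k = p := by
  simpa [hist] using (card_eq_sum_card_fiberwise (s := univ) (t := univ) (f := f)
    fun x _ => mem_univ _).symm

lemma prod_comp_eq_prod_pow_hist {M : Type*} [CommMonoid M] (f : Fin p → Fin d) (g : Fin d → M) :
    ∏ j, g (f j) = ∏ k, g k ^ hist f k := by
  rw [← prod_fiberwise univ f fun j => g (f j)]
  refine prod_congr rfl fun k _ => ?_
  rw [hist, ← prod_const]
  exact prod_congr rfl fun j hj => by rw [(mem_filter.1 hj).2]

lemma eq_of_monotone_of_hist_eq {f g : Fin p → Fin d} (hf : Monotone f) (hg : Monotone g)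
    (h : hist f = hist g) : f = g := by
  have hperm : (List.ofFn f).Perm (List.ofFn g) :=
    List.perm_iff_count.2 fun k => by rw [← hist_eq_count, ← hist_eq_count, h]
  exact List.ofFn_injective (hperm.eq_of_sortedLE hf.sortedLE_ofFn hg.sortedLE_ofFn)

lemma exists_monotone_hist_eq (g : Fin d → ℕ) (hg : ∑ k, g k = p) :
    ∃ f : Fin p → Fin d, Monotone f ∧ hist f = g := by
  set m : Multiset (Fin d) := ∑ k, Multiset.replicate (g k) k
  have hcount : ∀ k, m.count k = g k := fun k => by
    simp [m, Multiset.count_sum', Multiset.count_replicate]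
  set l : List (Fin d) := m.sort (· ≤ ·)
  obtain rfl : p = l.length := by simp [l, m, hg]
  refine ⟨l.get, ?_, ?_⟩
  · rw [← List.sortedLE_ofFn_iff, List.ofFn_get]
    exact (Multiset.pairwise_sort _ _).sortedLE
  · funext k
    rw [hist_eq_count, List.ofFn_get, ← hcount k, ← Multiset.coe_count, Multiset.sort_eq]

lemma multinomial_hist (f : Fin p → Fin d) :
    (Nat.multinomial univ (hist f) : ℝ) = p.factorial / ∏ k, ((hist f k).factorial : ℝ) := by
  have hspec := Nat.multinomial_spec univ (hist f)
  rw [sum_hist] at hspec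
  rw [eq_div_iff (prod_pos fun k _ => by positivity).ne', mul_comm]
  exact_mod_cast hspec

end Histogram

variable {p d : ℕ}

lemma sum_prod_mul_prod_eq_pow (q k : Fin d → ℝ) :
    ∑ i : Fin p → Fin d, (∏ j, q (i j)) * (∏ j, k (i j)) = (∑ x, q x * k x) ^ p := by
  rw [Fintype.sum_pow]
  exact sum_congr rfl fun i _ => prod_mul_distrib.symm

lemma spow_mul_spow (q k : Fin d → ℝ) (i : {f : Fin p → Fin d // Monotone f}) :
    spow p q i * spow p k i
      = Nat.multinomial univ (hist i.1) * ∏ x, (q x * k x) ^ hist i.1 x := by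
  rw [spow, spow, mul_mul_mul_comm, Real.mul_self_sqrt (by positivity), ← prod_mul_distrib,
    prod_comp_eq_prod_pow_hist i.1 fun x => q x * k x, multinomial_hist]

lemma sum_spow_mul_spow (q k : Fin d → ℝ) :
    ∑ i : {f : Fin p → Fin d // Monotone f}, spow p q i * spow p k i
      = (∑ x, q x * k x) ^ p := by
  rw [sum_pow_eq_sum_piAntidiag]
  refine sum_bij (fun i _ => hist i.1) (fun i _ => mem_piAntidiag.2 ⟨sum_hist i.1, by simp⟩)
    (fun i _ j _ h => Subtype.ext (eq_of_monotone_of_hist_eq i.2 j.2 h)) (fun g hg => ?_)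
    (fun i _ => spow_mul_spow q k i)
  obtain ⟨f, hf, rfl⟩ := exists_monotone_hist_eq g (mem_piAntidiag.1 hg).1
  exact ⟨⟨f, hf⟩, mem_univ _, rfl⟩

lemma sum_tpow_kernel_eq_sum_spow_kernel (q k : Fin d → ℝ) :
    ∑ i : Fin p → Fin d, (∏ j, q (i j)) * (∏ j, k (i j))
      = ∑ i : {f : Fin p → Fin d // Monotone f}, spow p q i * spow p k i := by
  rw [sum_prod_mul_prod_eq_pow, sum_spow_mul_spow]

theorem tpow_spow_same_kernel_and_attention_general (d p : ℕ) :
    (∀ q k : Fin d → ℝ,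
      ∑ i : Fin p → Fin d, (∏ j, q (i j)) * (∏ j, k (i j))
        = ∑ i : {f : Fin p → Fin d // Monotone f}, spow p q i * spow p k i)
    ∧ ∀ (t v : ℕ) (Q K : ℕ → Fin d → ℝ) (V : ℕ → Fin v → ℝ) (i : ℕ),
        1 ≤ i → i ≤ t → ∀ a : Fin v,
        ∑ j ∈ Finset.Icc 1 i,
            (∑ x : Fin p → Fin d, (∏ l, Q i (x l)) * (∏ l, K j (x l))) * V j a
          = ∑ j ∈ Finset.Icc 1 i,
              (∑ x : {f : Fin p → Fin d // Monotone f},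
                spow p (Q i) x * spow p (K j) x) * V j a :=
  ⟨sum_tpow_kernel_eq_sum_spow_kernel, fun _ _ Q K V i _ _ a =>
    sum_congr rfl fun j _ => by rw [sum_tpow_kernel_eq_sum_spow_kernel (Q i) (K j)]⟩

/-- For all d, p ≥ 1, tpow_p and spow_p induce the same kernel,
⟨tpow_p(q), tpow_p(k)⟩ = ⟨spow_p(q), spow_p(k)⟩ for all q, k ∈ ℝ^d, and
consequently linear attention with feature map tpow_p and with feature map
spow_p produce identical outputs for all inputs Q, K, V and all 1 ≤ i ≤ t. -/
theorem tpow_spow_same_kernel_and_attention (d p : ℕ) (hd : 1 ≤ d) (hp : 1 ≤ p) :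
    (∀ q k : Fin d → ℝ,
      ∑ i : Fin p → Fin d, (∏ j, q (i j)) * (∏ j, k (i j))
        = ∑ i : {f : Fin p → Fin d // Monotone f}, spow p q i * spow p k i)
    ∧ ∀ (t v : ℕ) (Q K : ℕ → Fin d → ℝ) (V : ℕ → Fin v → ℝ) (i : ℕ),
        1 ≤ i → i ≤ t → ∀ a : Fin v,
        ∑ j ∈ Finset.Icc 1 i,
            (∑ x : Fin p → Fin d, (∏ l, Q i (x l)) * (∏ l, K j (x l))) * V j a
          = ∑ j ∈ Finset.Icc 1 i,
              (∑ x : {f : Fin p → Fin d // Monotone f},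
                spow p (Q i) x * spow p (K j) x) * V j a :=
  tpow_spow_same_kernel_and_attention_general d p
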